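/- For n ≥ 3, the spider Sp(2^[n]) with n legs of length 2 satisfies χ_lat(Sp(2^[n])) = 2 if 3 ≤ n ≤ 9 and χ_lat(Sp(2^[n])) = 3 if n ≥ 10. -/

import Mathlib

open Finset

variable {V : Type*} [Fintype V] [DecidableEq V]

/-- The weight of a vertex `u` under the total labeling given by vertex labels `fv`
and edge labels `fe` : `w(u) = f(u) + \sum_{e incident to u} f(e)`. -/
def latWeight (G : SimpleGraph V) [DecidableRel G.Adj]
    (fv : V → ℕ) (fe : Sym2 V → ℕ) (u : V) : ℕ :=
  fv u + ∑ v ∈ G.neighborFinset u, fe s(u, v)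

/-- `fv, fe` together form a bijection from `V(G) ∪ E(G)` onto `{1, …, p + q}`,
where `p` is the order and `q` is the size of `G`. -/
def IsTotalLabeling (G : SimpleGraph V) [DecidableRel G.Adj]
    (fv : V → ℕ) (fe : Sym2 V → ℕ) : Prop :=
  Set.BijOn (Sum.elim fv (fun e : G.edgeSet => fe (e : Sym2 V))) Set.univ
    (Set.Icc 1 (Fintype.card V + G.edgeFinset.card))

/-- A local antimagic total labeling of `G` : a bijective total labeling such that any two
adjacent vertices get distinct weights. -/
def IsLocalAntimagicTotal (G : SimpleGraph V) [DecidableRel G.Adj]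
    (fv : V → ℕ) (fe : Sym2 V → ℕ) : Prop :=
  IsTotalLabeling G fv fe ∧
    ∀ ⦃u v : V⦄, G.Adj u v → latWeight G fv fe u ≠ latWeight G fv fe v

/-- The local antimagic total chromatic number `χ_lat(G)` : the minimum number of distinct
vertex weights taken over all local antimagic total labelings of `G`. -/
noncomputable def chiLat (G : SimpleGraph V) [DecidableRel G.Adj] : ℕ :=
  sInf {c | ∃ fv fe, IsLocalAntimagicTotal G fv fe ∧
    (Finset.univ.image (latWeight G fv fe)).card = c}

instance {W : Type*} (r : W → W → Prop) [DecidableEq W] [DecidableRel r] :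
    DecidableRel (SimpleGraph.fromRel r).Adj :=
  fun a b => decidable_of_iff _ (SimpleGraph.fromRel_adj r a b).symm

/-- Adjacency for the spider `Sp(2^[n])` : the center `none` is adjacent to each middle
vertex `some (i, false)`, and `some (i, false)` is adjacent to the leaf `some (i, true)`. -/
def spider2R (n : ℕ) : Option (Fin n × Bool) → Option (Fin n × Bool) → Bool
  | none, some (_, false) => true
  | some (i, false), some (j, true) => decide (i = j)
  | _, _ => false

/-- The spider `Sp(2^[n])` with `n` legs of length `2`. -/
abbrev spider2 (n : ℕ) : SimpleGraph (Option (Fin n × Bool)) :=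
  SimpleGraph.fromRel (fun a b => spider2R n a b = true)

/-!
In a labeling with only two weights, each path `x u_i v_i` forces `w(v_i) = w(x)`. Now `w(x)` is
a sum of `n + 1` distinct positive labels, so `2 w(x) ≥ (n + 1)(n + 2)`, while `n w(x) = ∑ w(v_i)`
is a sum of `2n` distinct labels from `[1, 4n + 1]`, so `2 n w(x) ≤ 12n² + 6n`. Together these give
`n² ≤ 9n + 4`, which fails for `n ≥ 10`. The matching upper bounds are explicit labelings: for every
`n` one with weights `7n + 1` on the `u_i`, `2n + 1` on the `v_i` and a third weight on `x`, and
for `3 ≤ n ≤ 9` tables in which `x` and the `v_i` share a weight.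
-/

namespace Finset

theorem card_mul_card_add_one_le_two_mul_sum {s : Finset ℕ} (hs : ∀ x ∈ s, 1 ≤ x) :
    #s * (#s + 1) ≤ 2 * ∑ x ∈ s, x := by
  induction s using Finset.induction_on_max with
  | empty => simp
  | insert a s hlt ih =>
    have ha : a ∉ s := fun h => (hlt a h).false
    have hcard : #s + 1 ≤ a := by
      have hsub : s ⊆ Ico 1 a := fun x hx => mem_Ico.mpr ⟨hs x (mem_insert_of_mem hx), hlt x hx⟩
      have := card_le_card hsub
      have := hs a (mem_insert_self a s)
      rw [Nat.card_Ico] at *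
      omega
    rw [card_insert_of_notMem ha, sum_insert ha]
    have := ih fun x hx => hs x (mem_insert_of_mem hx)
    nlinarith

theorem two_mul_sum_Icc_one (N : ℕ) : 2 * ∑ x ∈ Icc 1 N, x = N * (N + 1) := by
  induction N with
  | zero => simp
  | succ N ih => rw [sum_Icc_succ_top (by omega), mul_add, ih]; ring

theorem two_mul_sum_add_le_of_subset_Icc {s : Finset ℕ} {N : ℕ} (hs : s ⊆ Icc 1 N) :
    2 * ∑ x ∈ s, x + (N - #s) * (N - #s + 1) ≤ N * (N + 1) := by
  have hrest := card_mul_card_add_one_le_two_mul_sum (s := Icc 1 N \ s)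
    fun x hx => (mem_Icc.mp (mem_sdiff.mp hx).1).1
  rw [card_sdiff_of_subset hs, Nat.card_Icc, Nat.add_sub_cancel] at hrest
  have htotal := two_mul_sum_Icc_one N
  rw [← sum_sdiff hs] at htotal
  omega

theorem eq_of_card_image_le_two {α β : Type*} [Fintype α] [DecidableEq β] {w : α → β}
    (hw : #(univ.image w) ≤ 2) {a b c : α} (hab : w a ≠ w b) (hbc : w b ≠ w c) : w a = w c := by
  by_contra hac
  have h3 : #({w a, w b, w c} : Finset β) = 3 := card_eq_three.mpr ⟨_, _, _, hab, hac, hbc, rfl⟩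
  have hsub : ({w a, w b, w c} : Finset β) ⊆ univ.image w := by simp [insert_subset_iff]
  have := card_le_card hsub
  omega

end Finset

namespace Set.InjOn

variable {α : Type*} {f : α → ℕ} {s : Finset α}

theorem card_mul_card_add_one_le_two_mul_sum (hf : InjOn f s) (hs : ∀ x ∈ s, 1 ≤ f x) :
    #s * (#s + 1) ≤ 2 * ∑ x ∈ s, f x := by
  classical
  have := Finset.card_mul_card_add_one_le_two_mul_sum (s := s.image f) (by simpa using hs)
  rwa [card_image_of_injOn hf, sum_image hf] at this

theorem two_mul_sum_add_le {N : ℕ} (hf : InjOn f s) (hs : ∀ x ∈ s, f x ∈ Icc 1 N) :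
    2 * ∑ x ∈ s, f x + (N - #s) * (N - #s + 1) ≤ N * (N + 1) := by
  classical
  have := Finset.two_mul_sum_add_le_of_subset_Icc (s := s.image f) (N := N)
    (by simpa [subset_iff] using hs)
  rwa [card_image_of_injOn hf, sum_image hf] at this

end Set.InjOn

section LocalAntimagicTotal

variable {W : Type*} [Fintype W] {G : SimpleGraph W} [DecidableRel G.Adj]

theorem IsLocalAntimagicTotal.two_le_card_image_latWeight {fv : W → ℕ} {fe : Sym2 W → ℕ}
    (h : IsLocalAntimagicTotal G fv fe) {u v : W} (huv : G.Adj u v) :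
    2 ≤ #(univ.image (latWeight G fv fe)) :=
  one_lt_card.mpr ⟨_, mem_image_of_mem _ (mem_univ u), _, mem_image_of_mem _ (mem_univ v), h.2 huv⟩

theorem chiLat_eq_of_forall_le {c : ℕ}
    (hex : ∃ fv fe, IsLocalAntimagicTotal G fv fe ∧ #(univ.image (latWeight G fv fe)) ≤ c)
    (hle : ∀ fv fe, IsLocalAntimagicTotal G fv fe → c ≤ #(univ.image (latWeight G fv fe))) :
    chiLat G = c := by
  obtain ⟨fv, fe, h, hc⟩ := hex
  have hmem : c ∈ {c | ∃ fv fe, IsLocalAntimagicTotal G fv fe ∧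
      #(univ.image (latWeight G fv fe)) = c} := ⟨fv, fe, h, le_antisymm hc (hle fv fe h)⟩
  refine le_antisymm (Nat.sInf_le hmem) (le_csInf ⟨c, hmem⟩ ?_)
  rintro _ ⟨fv', fe', h', rfl⟩
  exact hle fv' fe' h'

end LocalAntimagicTotal

namespace spider2

variable {n : ℕ}

abbrev mid (i : Fin n) : Option (Fin n × Bool) := some (i, false)

abbrev leaf (i : Fin n) : Option (Fin n × Bool) := some (i, true)

theorem adj_iff {a b : Option (Fin n × Bool)} :
    (spider2 n).Adj a b ↔ ∃ i : Fin n,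
      (a = none ∧ b = mid i) ∨ (a = mid i ∧ b = none) ∨
      (a = mid i ∧ b = leaf i) ∨ (a = leaf i ∧ b = mid i) := by
  rw [SimpleGraph.fromRel_adj]
  constructor
  · rintro ⟨hne, h | h⟩ <;>
    · rcases a with _ | ⟨i, _ | _⟩ <;> rcases b with _ | ⟨j, _ | _⟩ <;> simp_all [spider2R]
  · rintro ⟨i, ⟨rfl, rfl⟩ | ⟨rfl, rfl⟩ | ⟨rfl, rfl⟩ | ⟨rfl, rfl⟩⟩ <;> simp [spider2R]

theorem adj_none_mid (i : Fin n) : (spider2 n).Adj none (mid i) :=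
  adj_iff.mpr ⟨i, .inl ⟨rfl, rfl⟩⟩

theorem adj_mid_leaf (i : Fin n) : (spider2 n).Adj (mid i) (leaf i) :=
  adj_iff.mpr ⟨i, .inr (.inr (.inl ⟨rfl, rfl⟩))⟩

theorem neighborFinset_none : (spider2 n).neighborFinset none = univ.image mid := by
  ext a
  simp only [SimpleGraph.mem_neighborFinset, adj_iff, mem_image, mem_univ, true_and]
  constructor
  · rintro ⟨i, rfl | ⟨h, -⟩ | ⟨h, -⟩ | ⟨h, -⟩⟩
    · exact ⟨i, rfl⟩
    all_goals simp at h
  · rintro ⟨i, rfl⟩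
    exact ⟨i, .inl rfl⟩

theorem neighborFinset_mid (i : Fin n) :
    (spider2 n).neighborFinset (mid i) = {none, leaf i} := by
  ext a
  simp only [SimpleGraph.mem_neighborFinset, adj_iff, mem_insert, mem_singleton]
  constructor
  · rintro ⟨j, ⟨h, -⟩ | ⟨-, rfl⟩ | ⟨h, rfl⟩ | ⟨h, -⟩⟩ <;> simp_all
  · rintro (rfl | rfl)
    · exact ⟨i, .inr (.inl ⟨rfl, rfl⟩)⟩
    · exact ⟨i, .inr (.inr (.inl ⟨rfl, rfl⟩))⟩

theorem neighborFinset_leaf (i : Fin n) : (spider2 n).neighborFinset (leaf i) = {mid i} := by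
  ext a
  simp only [SimpleGraph.mem_neighborFinset, adj_iff, mem_singleton]
  constructor
  · rintro ⟨j, ⟨h, -⟩ | ⟨h, -⟩ | ⟨h, -⟩ | ⟨h, rfl⟩⟩ <;> simp_all
  · rintro rfl
    exact ⟨i, .inr (.inr (.inr ⟨rfl, rfl⟩))⟩

def edge : Fin n × Bool → Sym2 (Option (Fin n × Bool))
  | (i, false) => s(none, mid i)
  | (i, true) => s(mid i, leaf i)

theorem edge_injective : Function.Injective (edge (n := n)) := by
  rintro ⟨i, _ | _⟩ ⟨j, _ | _⟩ h <;> simp_all [edge]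

theorem edge_mem_edgeSet (p : Fin n × Bool) : edge p ∈ (spider2 n).edgeSet := by
  rcases p with ⟨i, _ | _⟩
  exacts [adj_none_mid i, adj_mid_leaf i]

theorem exists_edge_eq {e : Sym2 (Option (Fin n × Bool))} (he : e ∈ (spider2 n).edgeSet) :
    ∃ p, edge p = e := by
  induction e using Sym2.ind with
  | _ a b =>
    obtain ⟨i, ⟨rfl, rfl⟩ | ⟨rfl, rfl⟩ | ⟨rfl, rfl⟩ | ⟨rfl, rfl⟩⟩ := adj_iff.mp he
    · exact ⟨(i, false), rfl⟩
    · exact ⟨(i, false), Sym2.eq_swap⟩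
    · exact ⟨(i, true), rfl⟩
    · exact ⟨(i, true), Sym2.eq_swap⟩

noncomputable def edgeEquiv (n : ℕ) : Fin n × Bool ≃ (spider2 n).edgeSet :=
  Equiv.ofBijective (fun p => ⟨edge p, edge_mem_edgeSet p⟩)
    ⟨fun _ _ h => edge_injective (Subtype.ext_iff.mp h),
      fun ⟨_, he⟩ => (exists_edge_eq he).imp fun _ hp => Subtype.ext hp⟩

theorem card_add_card_edgeFinset (n : ℕ) :
    Fintype.card (Option (Fin n × Bool)) + #(spider2 n).edgeFinset = 4 * n + 1 := by
  rw [SimpleGraph.edgeFinset_card, ← Fintype.card_congr (edgeEquiv n)]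
  simp only [Fintype.card_option, Fintype.card_prod, Fintype.card_fin, Fintype.card_bool]
  ring

section Labeling

variable {fv : Option (Fin n × Bool) → ℕ} {fe : Sym2 (Option (Fin n × Bool)) → ℕ}

def slotLabel (fv : Option (Fin n × Bool) → ℕ) (fe : Sym2 (Option (Fin n × Bool)) → ℕ) :
    Option (Fin n × Bool) ⊕ (Fin n × Bool) → ℕ :=
  Sum.elim fv (fe ∘ edge)

theorem isTotalLabeling_iff :
    IsTotalLabeling (spider2 n) fv fe ↔
      Set.BijOn (slotLabel fv fe) Set.univ (Set.Icc 1 (4 * n + 1)) := by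
  have hcomp : slotLabel fv fe = Sum.elim fv (fun e : (spider2 n).edgeSet => fe e) ∘
      Equiv.sumCongr (Equiv.refl _) (edgeEquiv n) := by
    ext (_ | _) <;> rfl
  rw [IsTotalLabeling, card_add_card_edgeFinset, hcomp,
    Set.bijOn_comp_iff (Equiv.injective _).injOn,
    Set.image_univ_of_surjective (Equiv.surjective _)]

theorem latWeight_none : latWeight (spider2 n) fv fe none = fv none + ∑ i, fe s(none, mid i) := by
  rw [latWeight, neighborFinset_none, sum_image fun i _ j _ h => by simpa using h]

theorem latWeight_mid (i : Fin n) :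
    latWeight (spider2 n) fv fe (mid i) = fv (mid i) + fe s(none, mid i) + fe s(mid i, leaf i) := by
  rw [latWeight, neighborFinset_mid, sum_insert (by simp), sum_singleton, Sym2.eq_swap, add_assoc]

theorem latWeight_leaf (i : Fin n) :
    latWeight (spider2 n) fv fe (leaf i) = fv (leaf i) + fe s(mid i, leaf i) := by
  rw [latWeight, neighborFinset_leaf, sum_singleton, Sym2.eq_swap]

theorem add_one_mul_add_two_le_two_mul_latWeight_none (h : IsTotalLabeling (spider2 n) fv fe) :
    (n + 1) * (n + 2) ≤ 2 * latWeight (spider2 n) fv fe none := by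
  have hbij := isTotalLabeling_iff.mp h
  let s := ({none} : Finset (Option (Fin n × Bool))).disjSum
    (univ.map (Function.Embedding.sectL (Fin n) false))
  have := hbij.injOn.mono (Set.subset_univ (s : Set _))
    |>.card_mul_card_add_one_le_two_mul_sum fun x _ => (hbij.mapsTo (Set.mem_univ x)).1
  simp only [s, card_disjSum, card_singleton, card_map, card_univ, Fintype.card_fin, slotLabel,
    sum_disjSum, Sum.elim_inl, sum_singleton, Sum.elim_inr, Function.comp_apply, edge, sum_map,
    Function.Embedding.sectL_apply] at this
  rw [latWeight_none]
  linarith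

theorem two_mul_sum_latWeight_leaf_add_le (h : IsTotalLabeling (spider2 n) fv fe) :
    2 * ∑ i, latWeight (spider2 n) fv fe (leaf i) + (2 * n + 1) * (2 * n + 2) ≤
      (4 * n + 1) * (4 * n + 2) := by
  have hbij := isTotalLabeling_iff.mp h
  let s := (univ.map ((Function.Embedding.sectL (Fin n) true).trans .some)).disjSum
    (univ.map (Function.Embedding.sectL (Fin n) true))
  have := hbij.injOn.mono (Set.subset_univ (s : Set _))
    |>.two_mul_sum_add_le fun x _ => hbij.mapsTo (Set.mem_univ x)
  simp only [s, slotLabel, sum_disjSum, Sum.elim_inl, sum_map, Function.Embedding.trans_apply,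
    Function.Embedding.sectL_apply, Function.Embedding.some_apply, Sum.elim_inr,
    Function.comp_apply, edge, card_disjSum, card_map, card_univ, Fintype.card_fin] at this
  rw [show 4 * n + 1 - (n + n) = 2 * n + 1 by omega] at this
  simp only [latWeight_leaf, sum_add_distrib]
  linarith

theorem three_le_card_image_latWeight (hn : 10 ≤ n) (h : IsLocalAntimagicTotal (spider2 n) fv fe) :
    3 ≤ #(univ.image (latWeight (spider2 n) fv fe)) := by
  by_contra! h2
  have hleaf (i : Fin n) :
      latWeight (spider2 n) fv fe (leaf i) = latWeight (spider2 n) fv fe none :=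
    (eq_of_card_image_le_two (by omega) (h.2 (adj_none_mid i)) (h.2 (adj_mid_leaf i))).symm
  have hcenter := add_one_mul_add_two_le_two_mul_latWeight_none h.1
  have hleaves := two_mul_sum_latWeight_leaf_add_le h.1
  simp only [hleaf, sum_const, card_univ, Fintype.card_fin, smul_eq_mul] at hleaves
  nlinarith [Nat.mul_le_mul_left n hcenter, Nat.mul_le_mul_right (n * n) hn]

end Labeling

def vertexLabel (x : ℕ) (u v : Fin n → ℕ) : Option (Fin n × Bool) → ℕ
  | none => x
  | some (i, false) => u i
  | some (i, true) => v i

def edgeIndexLabel (xu uv : Fin n → ℕ) : Fin n × Bool → ℕ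
  | (i, false) => xu i
  | (i, true) => uv i

noncomputable def edgeLabel (xu uv : Fin n → ℕ) : Sym2 (Option (Fin n × Bool)) → ℕ :=
  Function.extend edge (edgeIndexLabel xu uv) 0

section Tables

variable {x : ℕ} {u v xu uv : Fin n → ℕ}

theorem edgeLabel_edge (p : Fin n × Bool) : edgeLabel xu uv (edge p) = edgeIndexLabel xu uv p :=
  edge_injective.extend_apply _ _ p

theorem isTotalLabeling_of_image_eq
    (himage : univ.image (Sum.elim (vertexLabel x u v) (edgeIndexLabel xu uv)) =
      Icc 1 (4 * n + 1)) :
    IsTotalLabeling (spider2 n) (vertexLabel x u v) (edgeLabel xu uv) := by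
  have hslot : slotLabel (vertexLabel x u v) (edgeLabel xu uv) =
      Sum.elim (vertexLabel x u v) (edgeIndexLabel xu uv) := by
    ext (_ | p)
    exacts [rfl, edgeLabel_edge p]
  have hinj : Function.Injective (Sum.elim (vertexLabel x u v) (edgeIndexLabel xu uv)) := by
    rw [← Set.injOn_univ, ← coe_univ]
    refine card_image_iff.mp ?_
    simp only [himage, Nat.card_Icc, card_univ, Fintype.card_sum, Fintype.card_option,
      Fintype.card_prod, Fintype.card_fin, Fintype.card_bool]
    omega
  rw [isTotalLabeling_iff, hslot, ← coe_Icc, ← himage, coe_image, coe_univ]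
  exact hinj.injOn.bijOn_image

theorem latWeight_vertexLabel_none :
    latWeight (spider2 n) (vertexLabel x u v) (edgeLabel xu uv) none = x + ∑ i, xu i := by
  rw [latWeight_none]
  exact congrArg (x + ·) (sum_congr rfl fun i _ => edgeLabel_edge (i, false))

theorem latWeight_vertexLabel_mid (i : Fin n) :
    latWeight (spider2 n) (vertexLabel x u v) (edgeLabel xu uv) (mid i) = u i + xu i + uv i := by
  rw [latWeight_mid]
  exact congrArg₂ (u i + · + ·) (edgeLabel_edge (i, false)) (edgeLabel_edge (i, true))

theorem latWeight_vertexLabel_leaf (i : Fin n) :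
    latWeight (spider2 n) (vertexLabel x u v) (edgeLabel xu uv) (leaf i) = v i + uv i := by
  rw [latWeight_leaf]
  exact congrArg (v i + ·) (edgeLabel_edge (i, true))

theorem exists_labeling_of_tables {a b c : ℕ}
    (himage : univ.image (Sum.elim (vertexLabel x u v) (edgeIndexLabel xu uv)) =
      Icc 1 (4 * n + 1))
    (hmid : ∀ i, u i + xu i + uv i = a) (hleaf : ∀ i, v i + uv i = b)
    (hcenter : x + ∑ i, xu i = c) (hab : a ≠ b) (hac : a ≠ c) :
    ∃ fv fe, IsLocalAntimagicTotal (spider2 n) fv fe ∧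
      univ.image (latWeight (spider2 n) fv fe) ⊆ {a, b, c} := by
  refine ⟨vertexLabel x u v, edgeLabel xu uv, ⟨isTotalLabeling_of_image_eq himage, ?_⟩, ?_⟩
  · intro p q hpq
    obtain ⟨i, ⟨rfl, rfl⟩ | ⟨rfl, rfl⟩ | ⟨rfl, rfl⟩ | ⟨rfl, rfl⟩⟩ := adj_iff.mp hpq <;>
      simp only [latWeight_vertexLabel_none, latWeight_vertexLabel_mid,
        latWeight_vertexLabel_leaf, hcenter, hmid, hleaf] <;> omega
  · intro w hw
    obtain ⟨p, -, rfl⟩ := mem_image.mp hw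
    rcases p with _ | ⟨i, _ | _⟩ <;>
      simp [latWeight_vertexLabel_none, latWeight_vertexLabel_mid, latWeight_vertexLabel_leaf,
        hcenter, hmid, hleaf]

theorem exists_card_image_latWeight_le_two_of_tables {a b : ℕ}
    (himage : univ.image (Sum.elim (vertexLabel x u v) (edgeIndexLabel xu uv)) =
      Icc 1 (4 * n + 1))
    (hmid : ∀ i, u i + xu i + uv i = a) (hleaf : ∀ i, v i + uv i = b)
    (hcenter : x + ∑ i, xu i = b) (hab : a ≠ b) :
    ∃ fv fe, IsLocalAntimagicTotal (spider2 n) fv fe ∧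
      #(univ.image (latWeight (spider2 n) fv fe)) ≤ 2 := by
  obtain ⟨fv, fe, h, hsub⟩ := exists_labeling_of_tables himage hmid hleaf hcenter hab hab
  rw [pair_eq_singleton] at hsub
  exact ⟨fv, fe, h, (card_le_card hsub).trans card_le_two⟩

end Tables

/- The labels `2i + 1` of the `u_i v_i` and `2n - 2i` of the `v_i` are the odd and even numbers
up to `2n`; the `u_i` and the `x u_i` take the next two blocks of `n` labels. -/
theorem image_three_weight_labels_eq_Icc :
    univ.image (Sum.elim
      (vertexLabel (4 * n + 1) (fun i : Fin n => 3 * n - i) (fun i => 2 * n - 2 * i))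
      (edgeIndexLabel (fun i : Fin n => 4 * n - i) (fun i => 2 * i + 1))) =
      Icc 1 (4 * n + 1) := by
  ext m
  simp only [mem_image, mem_univ, true_and, mem_Icc]
  constructor
  · rintro ⟨(_ | ⟨i, _ | _⟩) | ⟨i, _ | _⟩, rfl⟩ <;>
      simp only [Sum.elim_inl, Sum.elim_inr, vertexLabel, edgeIndexLabel] <;> omega
  · rintro ⟨hm1, hm⟩
    by_cases hx : m = 4 * n + 1
    · exact ⟨.inl none, hx.symm⟩
    by_cases hxu : 3 * n + 1 ≤ m
    · exact ⟨.inr (⟨4 * n - m, by omega⟩, false), by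
        simp only [Sum.elim_inr, edgeIndexLabel]; omega⟩
    by_cases hu : 2 * n + 1 ≤ m
    · exact ⟨.inl (mid ⟨3 * n - m, by omega⟩), by
        simp only [Sum.elim_inl, vertexLabel]; omega⟩
    by_cases huv : m % 2 = 1
    · exact ⟨.inr (⟨(m - 1) / 2, by omega⟩, true), by
        simp only [Sum.elim_inr, edgeIndexLabel]; omega⟩
    · exact ⟨.inl (leaf ⟨(2 * n - m) / 2, by omega⟩), by
        simp only [Sum.elim_inl, vertexLabel]; omega⟩

theorem exists_card_image_latWeight_le_three (hn : 0 < n) :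
    ∃ fv fe, IsLocalAntimagicTotal (spider2 n) fv fe ∧
      #(univ.image (latWeight (spider2 n) fv fe)) ≤ 3 := by
  have hcenter : n * (3 * n + 1) ≤ ∑ i : Fin n, (4 * n - i) := by
    simpa using card_nsmul_le_sum univ (fun i : Fin n => 4 * n - i) (3 * n + 1)
      fun i _ => by omega
  obtain ⟨fv, fe, h, hsub⟩ := exists_labeling_of_tables (image_three_weight_labels_eq_Icc (n := n))
    (a := 7 * n + 1) (b := 2 * n + 1) (fun i => by omega) (fun i => by omega) rfl
    (by omega) (by nlinarith)
  exact ⟨fv, fe, h, (card_le_card hsub).trans card_le_three⟩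

theorem exists_card_image_latWeight_le_two (h3 : 3 ≤ n) (h9 : n ≤ 9) :
    ∃ fv fe, IsLocalAntimagicTotal (spider2 n) fv fe ∧
      #(univ.image (latWeight (spider2 n) fv fe)) ≤ 2 := by
  interval_cases n
  · exact exists_card_image_latWeight_le_two_of_tables (x := 2) (a := 25) (b := 14)
      (u := ![10, 12, 13]) (v := ![6, 5, 3])
      (xu := ![7, 4, 1]) (uv := ![8, 9, 11])
      (by decide) (by decide) (by decide) (by decide) (by decide)
  · exact exists_card_image_latWeight_le_two_of_tables (x := 2) (a := 28) (b := 19)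
      (u := ![17, 13, 16, 12]) (v := ![14, 11, 10, 4])
      (xu := ![6, 7, 3, 1]) (uv := ![5, 8, 9, 15])
      (by decide) (by decide) (by decide) (by decide) (by decide)
  · exact exists_card_image_latWeight_le_two_of_tables (x := 1) (a := 33) (b := 23)
      (u := ![21, 20, 17, 19, 16]) (v := ![18, 14, 13, 12, 8])
      (xu := ![7, 4, 6, 3, 2]) (uv := ![5, 9, 10, 11, 15])
      (by decide) (by decide) (by decide) (by decide) (by decide)
  · exact exists_card_image_latWeight_le_two_of_tables (x := 2) (a := 37) (b := 28)
      (u := ![25, 22, 24, 21, 23, 14]) (v := ![20, 19, 18, 17, 15, 12])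
      (xu := ![4, 6, 3, 5, 1, 7]) (uv := ![8, 9, 10, 11, 13, 16])
      (by decide) (by decide) (by decide) (by decide) (by decide)
  · exact exists_card_image_latWeight_le_two_of_tables (x := 1) (a := 45) (b := 36)
      (u := ![29, 28, 22, 16, 20, 18, 14]) (v := ![27, 25, 17, 15, 13, 12, 10])
      (xu := ![7, 6, 4, 8, 2, 3, 5]) (uv := ![9, 11, 19, 21, 23, 24, 26])
      (by decide) (by decide) (by decide) (by decide) (by decide)
  · exact exists_card_image_latWeight_le_two_of_tables (x := 9) (a := 44) (b := 45)
      (u := ![25, 11, 10, 24, 20, 21, 22, 23]) (v := ![33, 13, 14, 30, 29, 28, 27, 26])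
      (xu := ![7, 1, 3, 5, 8, 6, 4, 2]) (uv := ![12, 32, 31, 15, 16, 17, 18, 19])
      (by decide) (by decide) (by decide) (by decide) (by decide)
  · exact exists_card_image_latWeight_le_two_of_tables (x := 6) (a := 50) (b := 55)
      (u := ![28, 13, 27, 14, 12, 11, 17, 15, 16]) (v := ![37, 19, 35, 21, 22, 23, 31, 30, 29])
      (xu := ![4, 1, 3, 2, 5, 7, 9, 10, 8]) (uv := ![18, 36, 20, 34, 33, 32, 24, 25, 26])
      (by decide) (by decide) (by decide) (by decide) (by decide)

end spider2

theorem chiLat_spider2 (n : ℕ) (hn : 3 ≤ n) :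
    chiLat (spider2 n) = if n ≤ 9 then 2 else 3 := by
  split_ifs with h9
  · exact chiLat_eq_of_forall_le (spider2.exists_card_image_latWeight_le_two hn h9)
      fun _ _ h => h.two_le_card_image_latWeight (spider2.adj_none_mid ⟨0, by omega⟩)
  · exact chiLat_eq_of_forall_le (spider2.exists_card_image_latWeight_le_three (by omega))
      fun _ _ => spider2.three_le_card_image_latWeight (by omega)
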